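/- arXiv:0911.4186 — 2 statements merged into one kernel-verified Lean document; each statement's English description precedes it below -/
import Mathlib

section
/- Let A ∈ ℤ^{m×n} satisfy the regularity assumptions (gcd of all m×m minors is 1 and {x ≥ 0 : Ax = 0} = {0}), let v be the sum of the columns of A, let C be the cone generated by the columns of A, let L_A^⊥ = {z ∈ ℤ^n : Az = 0}, and let μ denote the inhomogeneous minimum. Then for every t ≥ μ(P(A,v) − 𝟙, L_A^⊥) and every b ∈ (t·v + C) ∩ ℤ^m, the polytope P(A,b) contains an integer point. Consequently the diagonal Frobenius number g(A) satisfies g(A) ≤ μ(P(A,v) − 𝟙, L_A^⊥). -/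
/-!
Write `b = A z` with `z ∈ ℤⁿ` (possible because the maximal minors are coprime) and
`b - t v = A λ` with `λ ≥ 0`. Then `z - λ - t 𝟙` lies in the real kernel of `A`; if
`L_A^⊥ + σ (P(A,v) - 𝟙)` covers that kernel, it equals `l + σ (p - 𝟙)` with `l ∈ L_A^⊥`,
`p ≥ 0`, so `z - l = λ + σ p + (t - σ) 𝟙`. This integer vector has entries `> -1`, hence is a
nonnegative solution, as soon as `σ < t + 1`; such `σ` exist for every `t ≥ μ` even though the
infimum need not be attained. The covering set is nonempty because, by Cramer's rule at a
nonzero maximal minor, the real kernel is spanned by integer kernel vectors, and rounding the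
coefficients moves a point by a bounded amount.
-/

open Matrix MeasureTheory

noncomputable section

/-- The real matrix associated to an integral matrix. -/
def Amap {m n : ℕ} (A : Matrix (Fin m) (Fin n) ℤ) : Matrix (Fin m) (Fin n) ℝ :=
  A.map (Int.cast : ℤ → ℝ)

/-- The cone generated by the columns of `A`. -/
def cone {m n : ℕ} (A : Matrix (Fin m) (Fin n) ℤ) : Set (Fin m → ℝ) :=
  {b | ∃ lam : Fin n → ℝ, (∀ i, 0 ≤ lam i) ∧ (Amap A).mulVec lam = b}

/-- The knapsack problem `Ax = b`, `x ≥ 0` has an integral solution. -/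
def Feasible {m n : ℕ} (A : Matrix (Fin m) (Fin n) ℤ) (b : Fin m → ℤ) : Prop :=
  ∃ x : Fin n → ℤ, (∀ i, 0 ≤ x i) ∧ A.mulVec x = b

/-- The sum of the columns of `A` (as a real vector). -/
def colSum {m n : ℕ} (A : Matrix (Fin m) (Fin n) ℤ) : Fin m → ℝ :=
  (Amap A).mulVec 1

/-- The regularity assumptions: the gcd of all maximal minors is `1` and
`{x ≥ 0 : Ax = 0} = {0}`. -/
def Regular {m n : ℕ} (A : Matrix (Fin m) (Fin n) ℤ) : Prop :=
  (Finset.gcd Finset.univ (fun g : Fin m ↪ Fin n => (A.submatrix id g).det) = 1) ∧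
  (∀ x : Fin n → ℝ, (∀ i, 0 ≤ x i) → (Amap A).mulVec x = 0 → x = 0)

/-- The diagonal Frobenius number of `A`: the least `t ≥ 0` such that every integral
vector in `t·v + C` is a nonnegative integral combination of the columns of `A`. -/
def diagFrob {m n : ℕ} (A : Matrix (Fin m) (Fin n) ℤ) : ℝ :=
  sInf {t : ℝ | 0 ≤ t ∧ ∀ b : Fin m → ℤ,
    ((fun i => (b i : ℝ)) - t • colSum A) ∈ cone A → Feasible A b}

/-- The volume of the `k`-dimensional Euclidean unit ball. -/
def unitBallVol (k : ℕ) : ℝ :=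
  (volume (Metric.ball (0 : EuclideanSpace ℝ (Fin k)) 1)).toReal

end

/-- The inhomogeneous minimum of the set `P(A,v) − 𝟙` with respect to the lattice
`L_A^⊥ = {z ∈ ℤ^n : Az = 0}` inside the real kernel of `A`. -/
noncomputable def inhomMinPerp {m n : ℕ} (A : Matrix (Fin m) (Fin n) ℤ) : ℝ :=
  sInf {σ : ℝ | 0 ≤ σ ∧ ∀ x : Fin n → ℝ, (Amap A).mulVec x = 0 →
    ∃ l : Fin n → ℤ, A.mulVec l = 0 ∧
      ∃ s ∈ (fun p => p - (1 : Fin n → ℝ)) ''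
        {x : Fin n → ℝ | (∀ i, 0 ≤ x i) ∧ (Amap A).mulVec x = colSum A},
        x = (fun i => (l i : ℝ)) + σ • s}

namespace Matrix

lemma mul_one_submatrix {m n R : Type*} [Fintype n] [DecidableEq n] [Semiring R]
    (A : Matrix m n R) (g : m → n) : A * (1 : Matrix n n R).submatrix id g = A.submatrix id g :=
  mul_submatrix_one (Equiv.refl n) g A

variable {m n R : Type*} [Fintype m] [DecidableEq m] [CommRing R]

lemma det_submatrix_map {S : Type*} [CommRing S] (f : R →+* S) (A : Matrix m n R) (g : m → n) :
    ((A.map f).submatrix id g).det = f (A.submatrix id g).det := by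
  rw [RingHom.map_det, submatrix_map]; rfl

variable [DecidableEq n]

lemma det_submatrix_smul_mem_range_mulVecLin [Fintype n] (A : Matrix m n R) (g : m → n)
    (y : m → R) : (A.submatrix id g).det • y ∈ LinearMap.range A.mulVecLin :=
  ⟨(1 : Matrix n n R).submatrix id g *ᵥ (A.submatrix id g).adjugate *ᵥ y, by
    rw [mulVecLin_apply, mulVec_mulVec, mulVec_mulVec, mul_one_submatrix, mul_adjugate,
      smul_mulVec, one_mulVec]⟩

lemma mulVec_surjective_of_gcd_det_submatrix_eq_one [Fintype n] {A : Matrix m n ℤ}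
    (h : Finset.univ.gcd (fun g : m ↪ n => (A.submatrix id g).det) = 1) :
    Function.Surjective A.mulVec := by
  intro b
  obtain ⟨c, hc⟩ := Finset.univ.gcd_eq_sum_mul (fun g : m ↪ n => (A.submatrix id g).det)
  have hb : b = ∑ g : m ↪ n, (A.submatrix id g).det • (c g • b) := by
    simp_rw [smul_smul, ← Finset.sum_smul, ← hc, h, one_smul]
  obtain ⟨z, hz⟩ := Submodule.sum_mem (LinearMap.range A.mulVecLin) (t := Finset.univ)
    fun (g : m ↪ n) _ => det_submatrix_smul_mem_range_mulVecLin A g (c g • b)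
  exact ⟨z, hz.trans hb.symm⟩

/-- `(A.submatrix id g).det` times the projection onto the kernel of `A` along the coordinates
indexed by the range of `g` (Cramer's rule). -/
def kerProj (A : Matrix m n R) (g : m → n) : Matrix n n R :=
  (A.submatrix id g).det • 1 - (1 : Matrix n n R).submatrix id g * (A.submatrix id g).adjugate * A

lemma mul_kerProj [Fintype n] (A : Matrix m n R) (g : m → n) : A * kerProj A g = 0 := by
  rw [kerProj, Matrix.mul_sub, Matrix.mul_smul, Matrix.mul_one, ← Matrix.mul_assoc,
    ← Matrix.mul_assoc, mul_one_submatrix, mul_adjugate, Matrix.smul_mul, Matrix.one_mul, sub_self]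

lemma kerProj_mulVec_of_mulVec_eq_zero [Fintype n] {A : Matrix m n R} (g : m → n) {x : n → R}
    (hx : A *ᵥ x = 0) : kerProj A g *ᵥ x = (A.submatrix id g).det • x := by
  rw [kerProj, sub_mulVec, ← mulVec_mulVec, hx, mulVec_zero, sub_zero, smul_mulVec, one_mulVec]

lemma map_kerProj {S : Type*} [CommRing S] (f : R →+* S) (A : Matrix m n R) (g : m → n) :
    (kerProj A g).map f = kerProj (A.map f) g := by
  have hadj : (A.submatrix id g).adjugate.map f = ((A.map f).submatrix id g).adjugate := by
    rw [submatrix_map]; exact RingHom.map_adjugate f _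
  rw [kerProj, kerProj, Matrix.map_sub _ (map_sub f), Matrix.map_mul, Matrix.map_mul, hadj,
    ← submatrix_map, map_smul' _ _ _ (map_mul f), ← det_submatrix_map,
    Matrix.map_one _ f.map_zero f.map_one]

end Matrix

lemma Matrix.abs_map_mulVec_sub_mulVec_floor_le {m n : Type*} [Fintype n] (P : Matrix m n ℤ)
    (c : n → ℝ) (k : m) :
    |(P.map ((↑) : ℤ → ℝ) *ᵥ c) k - ((P *ᵥ fun j => ⌊c j⌋) k : ℝ)| ≤ ∑ j, |(P k j : ℝ)| := by
  have hfract : (P.map ((↑) : ℤ → ℝ) *ᵥ c) k - ((P *ᵥ fun j => ⌊c j⌋) k : ℝ)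
      = ∑ j, (P k j : ℝ) * Int.fract (c j) := by
    simp only [mulVec, dotProduct, map_apply, Int.cast_sum, Int.cast_mul, ← Finset.sum_sub_distrib,
      ← mul_sub, Int.self_sub_floor]
  rw [hfract]
  refine (Finset.abs_sum_le_sum_abs _ _).trans (Finset.sum_le_sum fun j _ => ?_)
  rw [abs_mul, Int.abs_fract]
  exact mul_le_of_le_one_right (abs_nonneg _) (Int.fract_lt_one _).le

lemma Matrix.exists_int_ker_near_of_det_submatrix_ne_zero {m n : Type*} [Fintype m]
    [DecidableEq m] [Fintype n] [DecidableEq n] {A : Matrix m n ℤ} {g : m → n}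
    (hd : (A.submatrix id g).det ≠ 0) :
    ∃ R : ℝ, ∀ x : n → ℝ, A.map ((↑) : ℤ → ℝ) *ᵥ x = 0 →
      ∃ l : n → ℤ, A *ᵥ l = 0 ∧ ∀ k, |x k - l k| ≤ R := by
  set U := kerProj A g
  refine ⟨⨆ k, ∑ j, |(U k j : ℝ)|, fun x hx => ?_⟩
  set c : n → ℝ := ((A.submatrix id g).det : ℝ)⁻¹ • x
  have hc : U.map ((↑) : ℤ → ℝ) *ᵥ c = x := by
    change U.map (Int.castRingHom ℝ) *ᵥ c = x
    have hx' : A.map (Int.castRingHom ℝ) *ᵥ c = 0 := by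
      change A.map Int.cast *ᵥ c = 0
      rw [mulVec_smul, hx, smul_zero]
    rw [map_kerProj, kerProj_mulVec_of_mulVec_eq_zero g hx', det_submatrix_map, smul_smul]
    simp [hd]
  refine ⟨U *ᵥ fun j => ⌊c j⌋, by rw [mulVec_mulVec, mul_kerProj, zero_mulVec], fun k => ?_⟩
  calc |x k - ((U *ᵥ fun j => ⌊c j⌋) k : ℝ)| ≤ ∑ j, |(U k j : ℝ)| := by
        simpa only [hc] using abs_map_mulVec_sub_mulVec_floor_le U c k
    _ ≤ ⨆ k, ∑ j, |(U k j : ℝ)| :=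
        le_ciSup (f := fun k => ∑ j, |(U k j : ℝ)|) (Finite.bddAbove_range _) k

lemma Amap_mulVec_intCast {m n : ℕ} (A : Matrix (Fin m) (Fin n) ℤ) (z : Fin n → ℤ) :
    (Amap A).mulVec (fun k => (z k : ℝ)) = fun i => ((A.mulVec z) i : ℝ) := by
  funext i
  simp [Amap, mulVec, dotProduct]

/-- `L_A^⊥ + σ (P(A,v) − 𝟙)` covers the real kernel of `A`. -/
def CoversKernel {m n : ℕ} (A : Matrix (Fin m) (Fin n) ℤ) (σ : ℝ) : Prop :=
  ∀ x : Fin n → ℝ, (Amap A).mulVec x = 0 →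
    ∃ l : Fin n → ℤ, A.mulVec l = 0 ∧
      ∃ s ∈ (fun p => p - (1 : Fin n → ℝ)) ''
        {x : Fin n → ℝ | (∀ i, 0 ≤ x i) ∧ (Amap A).mulVec x = colSum A},
        x = (fun i => (l i : ℝ)) + σ • s

section

variable {m n : ℕ} {A : Matrix (Fin m) (Fin n) ℤ}

lemma inhomMinPerp_eq_sInf : inhomMinPerp A = sInf {σ | 0 ≤ σ ∧ CoversKernel A σ} := rfl

lemma coversKernel_of_forall_exists_abs_sub_le {σ : ℝ} (hσ : 0 < σ)
    (h : ∀ x : Fin n → ℝ, (Amap A).mulVec x = 0 →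
      ∃ l : Fin n → ℤ, A.mulVec l = 0 ∧ ∀ k, |x k - l k| ≤ σ) :
    CoversKernel A σ := by
  intro x hx
  obtain ⟨l, hl, hxl⟩ := h x hx
  set s := σ⁻¹ • (x - fun i => (l i : ℝ))
  refine ⟨l, hl, s, ⟨s + 1, ⟨fun k => ?_, ?_⟩, add_sub_cancel_right s 1⟩, ?_⟩
  · have : -1 ≤ σ⁻¹ * (x k - l k) := by
      rw [← div_eq_inv_mul, le_div_iff₀ hσ]
      linarith [neg_abs_le (x k - l k), hxl k]
    simpa [s] using (neg_le_iff_add_nonneg).mp this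
  · rw [mulVec_add, mulVec_smul, mulVec_sub, hx, Amap_mulVec_intCast, hl]
    ext i
    simp [colSum]
  · rw [smul_smul, mul_inv_cancel₀ hσ.ne', one_smul, add_sub_cancel]

lemma exists_pos_coversKernel
    (h : Finset.univ.gcd (fun g : Fin m ↪ Fin n => (A.submatrix id g).det) = 1) :
    ∃ σ, 0 < σ ∧ CoversKernel A σ := by
  obtain ⟨g, -, hg⟩ : ∃ g : Fin m ↪ Fin n, g ∈ Finset.univ ∧ (A.submatrix id g).det ≠ 0 := by
    by_contra! h0
    exact zero_ne_one ((Finset.gcd_eq_zero_iff.mpr h0).symm.trans h)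
  obtain ⟨R, hR⟩ := exists_int_ker_near_of_det_submatrix_ne_zero hg
  refine ⟨max R 1, by positivity, coversKernel_of_forall_exists_abs_sub_le (by positivity)
    fun x hx => ?_⟩
  obtain ⟨l, hl, hxl⟩ := hR x hx
  exact ⟨l, hl, fun k => (hxl k).trans (le_max_left R 1)⟩

lemma feasible_of_coversKernel {σ t : ℝ} (hσ : 0 ≤ σ) (hcov : CoversKernel A σ)
    (hσt : σ < t + 1) {b : Fin m → ℤ} (hb : (fun i => (b i : ℝ)) - t • colSum A ∈ cone A)
    {z : Fin n → ℤ} (hz : A.mulVec z = b) : Feasible A b := by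
  obtain ⟨lam, hlam, hAlam⟩ := hb
  obtain ⟨l, hl, -, ⟨p, ⟨hp, -⟩, rfl⟩, hxl⟩ :=
    hcov ((fun k => (z k : ℝ)) - lam - t • 1) (by
      rw [mulVec_sub, mulVec_sub, hAlam, mulVec_smul, Amap_mulVec_intCast, hz]
      simp [colSum])
  refine ⟨z - l, fun k => ?_, by rw [mulVec_sub, hz, hl, sub_zero]⟩
  have hk := congrFun hxl k
  simp only [Pi.sub_apply, Pi.add_apply, Pi.smul_apply, smul_eq_mul, Pi.one_apply] at hk
  -- `z - l = λ + σ p + (t - σ) 𝟙` is integral with entries `> -1`.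
  have : (-1 : ℝ) < ((z k - l k : ℤ) : ℝ) := by
    push_cast
    linarith [hlam k, mul_nonneg hσ (hp k)]
  have : (-1 : ℤ) < z k - l k := by exact_mod_cast this
  show 0 ≤ z k - l k
  omega

end

theorem feasible_of_ge_inhomMin_general (m n : ℕ)
    (A : Matrix (Fin m) (Fin n) ℤ) (hreg : Regular A) :
    (∀ t : ℝ, inhomMinPerp A ≤ t →
      ∀ b : Fin m → ℤ, ((fun i => (b i : ℝ)) - t • colSum A) ∈ cone A → Feasible A b) ∧
    diagFrob A ≤ inhomMinPerp A := by
  obtain ⟨hgcd, -⟩ := hreg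
  obtain ⟨σ₀, hσ₀, hcov₀⟩ := exists_pos_coversKernel hgcd
  have hne : {σ | 0 ≤ σ ∧ CoversKernel A σ}.Nonempty := ⟨σ₀, hσ₀.le, hcov₀⟩
  have hfeas : ∀ t : ℝ, inhomMinPerp A ≤ t →
      ∀ b : Fin m → ℤ, ((fun i => (b i : ℝ)) - t • colSum A) ∈ cone A → Feasible A b := by
    intro t ht b hb
    rw [inhomMinPerp_eq_sInf] at ht
    obtain ⟨σ, ⟨hσ, hcov⟩, hσt⟩ := exists_lt_of_csInf_lt hne (ht.trans_lt (lt_add_one t))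
    obtain ⟨z, hz⟩ := mulVec_surjective_of_gcd_det_submatrix_eq_one hgcd b
    exact feasible_of_coversKernel hσ hcov hσt hb hz
  have hμ : 0 ≤ inhomMinPerp A := by
    rw [inhomMinPerp_eq_sInf]
    exact le_csInf hne fun _ h => h.1
  exact ⟨hfeas, csInf_le ⟨0, fun _ h => h.1⟩ ⟨hμ, hfeas _ le_rfl⟩⟩

theorem feasible_of_ge_inhomMin (m n : ℕ) (hm : 1 ≤ m) (hmn : m < n)
    (A : Matrix (Fin m) (Fin n) ℤ) (hreg : Regular A) :
    (∀ t : ℝ, inhomMinPerp A ≤ t →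
      ∀ b : Fin m → ℤ, ((fun i => (b i : ℝ)) - t • colSum A) ∈ cone A → Feasible A b) ∧
    diagFrob A ≤ inhomMinPerp A :=
  feasible_of_ge_inhomMin_general m n A hreg
end

section
/- Let K be a 0-symmetric convex body in ℝ^k and L a full-rank lattice in ℝ^k. Then the inhomogeneous minimum satisfies (1/2)λ_k(K,L) ≤ μ(K,L) ≤ (1/2)(λ_1(K,L) + λ_2(K,L) + ... + λ_k(K,L)) (Jarník's inequalities). -/
/-!
Everything is measured with the gauge `‖·‖_K` of `K`, which is a seminorm since `K` is convex,
symmetric and absorbent; `x ∈ rK` gives `‖x‖_K ≤ r`, and `‖x‖_K < r` gives `x ∈ rK`.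

Lower bound: if `L + σK` is the whole space and `v ∈ L` has `‖v‖_K ≤ r`, write `v / 2 = l + σ s`;
then `v = l + (v - l)` with `l, v - l ∈ L` both of gauge at most `r / 2 + σ`. So the lattice
vectors of gauge `≤ r` lie in the span of those of gauge `< r'` whenever `r / 2 + σ < r'`, and
taking `r` just above `λ_k` and `r'` just below it forces `λ_k ≤ 2σ`.

Upper bound: pick linearly independent lattice vectors `v_j` with `‖v_j‖_K ≤ λ_j + ε`. Rounding
the coordinates of any `x` in the basis `(v_j)` gives `l ∈ L` with `‖x - l‖_K ≤ ½ ∑ ‖v_j‖_K`.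
-/

open Matrix Pointwise

noncomputable section

/-- The `i`-th successive minimum of `K` with respect to the lattice `L`. -/
def succMin {k : ℕ} (K L : Set (EuclideanSpace ℝ (Fin k))) (i : ℕ) : ℝ :=
  sInf {r : ℝ | 0 < r ∧ i ≤ Set.finrank ℝ (L ∩ r • K)}

/-- The inhomogeneous minimum of `K` with respect to `L`: the least `σ ≥ 0` with
`L + σK = ℝ^k`. -/
def inhomMin {k : ℕ} (K L : Set (EuclideanSpace ℝ (Fin k))) : ℝ :=
  sInf {σ : ℝ | 0 ≤ σ ∧ ∀ x : EuclideanSpace ℝ (Fin k), ∃ l ∈ L, ∃ s ∈ K, x = l + σ • s}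

open Finset Submodule

theorem exists_mem_notMem_span_of_lt_finrank {V : Type*} [AddCommGroup V] [Module ℝ V]
    [FiniteDimensional ℝ V] {m : ℕ} {s : Set V} (v : Fin m → V) (h : m < Set.finrank ℝ s) :
    ∃ w ∈ s, w ∉ span ℝ (Set.range v) := by
  by_contra! hs
  exact h.not_ge ((finrank_mono (span_le.2 hs)).trans
    ((finrank_range_le_card v).trans_eq (Fintype.card_fin m)))

theorem sum_Icc_one_eq_sum_fin {M : Type*} [AddCommMonoid M] (f : ℕ → M) (k : ℕ) :
    ∑ i ∈ Icc 1 k, f i = ∑ j : Fin k, f (j + 1) := by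
  rw [Fin.sum_univ_eq_sum_range (fun j => f (j + 1)), range_eq_Ico, sum_Ico_add']
  rfl

section Gauge

variable {E : Type*} [AddCommGroup E] [Module ℝ E] {K : Set E}

theorem mem_smul_of_gauge_lt (hKb : Balanced ℝ K) (hKa : Absorbent ℝ K) {r : ℝ} {x : E}
    (h : gauge K x < r) : x ∈ r • K := by
  obtain ⟨a, ha, har, hx⟩ := exists_lt_of_gauge_lt hKa h
  refine hKb.smul_mono ?_ hx
  simp only [Real.norm_eq_abs, abs_of_pos ha, abs_of_pos (ha.trans har), har.le]

theorem exists_gauge_sub_le_half_sum (hKc : Convex ℝ K) (hKb : Balanced ℝ K)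
    (hKa : Absorbent ℝ K) (L : AddSubgroup E) {ι : Type*} [Fintype ι] (b : Module.Basis ι ℝ E)
    (hb : ∀ i, b i ∈ L) (x : E) : ∃ l ∈ L, gauge K (x - l) ≤ (1 / 2) * ∑ i, gauge K (b i) := by
  set p := gaugeSeminorm hKb hKc hKa
  set c := b.repr x
  refine ⟨∑ i, round (c i) • b i, sum_mem fun i _ => zsmul_mem (hb i) _, ?_⟩
  have hfrac : x - ∑ i, round (c i) • b i = ∑ i, (c i - round (c i)) • b i := by
    conv_lhs => rw [← b.sum_repr x]
    simp only [c, sub_smul, sum_sub_distrib, Int.cast_smul_eq_zsmul]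
  calc gauge K (x - ∑ i, round (c i) • b i) = p (∑ i, (c i - round (c i)) • b i) := by
        rw [hfrac]; rfl
    _ ≤ ∑ i, p ((c i - round (c i)) • b i) :=
        le_sum_of_subadditive p (map_zero p).le (map_add_le_add p) _ _
    _ = ∑ i, |c i - round (c i)| * p (b i) := by simp only [map_smul_eq_mul, Real.norm_eq_abs]
    _ ≤ ∑ i, 1 / 2 * p (b i) :=
        sum_le_sum fun i _ => mul_le_mul_of_nonneg_right (abs_sub_round _) (apply_nonneg p _)
    _ = _ := (mul_sum _ _ _).symm

theorem covers_of_half_sum_gauge_lt (hKc : Convex ℝ K) (hKb : Balanced ℝ K)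
    (hKa : Absorbent ℝ K) (L : AddSubgroup E) {ι : Type*} [Fintype ι] (b : Module.Basis ι ℝ E)
    (hb : ∀ i, b i ∈ L) {σ : ℝ} (hσ : (1 / 2) * ∑ i, gauge K (b i) < σ) (x : E) :
    ∃ l ∈ L, ∃ s ∈ K, x = l + σ • s := by
  obtain ⟨l, hl, hxl⟩ := exists_gauge_sub_le_half_sum hKc hKb hKa L b hb x
  obtain ⟨s, hs, hsx⟩ := mem_smul_of_gauge_lt hKb hKa (hxl.trans_lt hσ)
  exact ⟨l, hl, s, hs, eq_add_of_sub_eq' hsx.symm⟩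

variable [FiniteDimensional ℝ E]

theorem finrank_inter_smul_mono (hKb : Balanced ℝ K) (L : Set E) {r r' : ℝ} (hr : 0 ≤ r)
    (h : r ≤ r') : Set.finrank ℝ (L ∩ r • K) ≤ Set.finrank ℝ (L ∩ r' • K) :=
  Set.finrank_mono <| Set.inter_subset_inter_right L <| hKb.smul_mono <| by
    simp only [Real.norm_eq_abs, abs_of_nonneg hr, abs_of_nonneg (hr.trans h), h]

theorem exists_finrank_le_finrank_inter_smul (hKb : Balanced ℝ K) (hKa : Absorbent ℝ K)
    (L : Set E) {ι : Type*} [Fintype ι] (b : Module.Basis ι ℝ E) (hb : ∀ i, b i ∈ L) :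
    ∃ r : ℝ, 0 < r ∧ Module.finrank ℝ E ≤ Set.finrank ℝ (L ∩ r • K) := by
  have hpos : 0 < ∑ i, gauge K (b i) + 1 :=
    add_pos_of_nonneg_of_pos (sum_nonneg fun i _ => gauge_nonneg _) one_pos
  refine ⟨∑ i, gauge K (b i) + 1, hpos, ?_⟩
  have hsub : Set.range b ⊆ L ∩ (∑ i, gauge K (b i) + 1) • K := by
    rintro _ ⟨i, rfl⟩
    refine ⟨hb i, mem_smul_of_gauge_lt hKb hKa ?_⟩
    exact lt_add_of_le_of_pos (single_le_sum (fun j _ => gauge_nonneg (b j)) (mem_univ i)) one_pos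
  calc Module.finrank ℝ E = Set.finrank ℝ (Set.range b) := by
        rw [Set.finrank, b.span_eq, finrank_top]
    _ ≤ _ := Set.finrank_mono hsub

theorem finrank_inter_smul_le_of_covers (hKc : Convex ℝ K) (hKb : Balanced ℝ K)
    (hKa : Absorbent ℝ K) (L : AddSubgroup E) {σ r r' : ℝ} (hσ : 0 ≤ σ)
    (hcov : ∀ x, ∃ l ∈ L, ∃ s ∈ K, x = l + σ • s) (hr : 0 ≤ r) (hr' : r / 2 + σ < r') :
    Set.finrank ℝ ((L : Set E) ∩ r • K) ≤ Set.finrank ℝ ((L : Set E) ∩ r' • K) := by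
  set p := gaugeSeminorm hKb hKc hKa
  have hspan : ∀ y ∈ L, p y ≤ r / 2 + σ → y ∈ span ℝ ((L : Set E) ∩ r' • K) := fun y hy hpy =>
    subset_span ⟨hy, mem_smul_of_gauge_lt hKb hKa (hpy.trans_lt hr')⟩
  refine finrank_mono (span_le.2 fun v ⟨hvL, hvK⟩ => ?_)
  obtain ⟨l, hl, s, hs, hv⟩ := hcov ((1 / 2 : ℝ) • v)
  have hpσs : p (σ • s) ≤ σ := by
    rw [map_smul_eq_mul, Real.norm_eq_abs, abs_of_nonneg hσ]
    exact mul_le_of_le_one_right hσ (gauge_le_one_of_mem hs)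
  have hpv : p ((1 / 2 : ℝ) • v) ≤ r / 2 := by
    have hpv' : p v ≤ r := gauge_le_of_mem hr hvK
    rw [map_smul_eq_mul, Real.norm_of_nonneg (by norm_num)]; linarith
  have hl_eq : l = (1 / 2 : ℝ) • v - σ • s := eq_sub_of_add_eq hv.symm
  have hvl_eq : v - l = (1 / 2 : ℝ) • v + σ • s := by rw [hl_eq]; module
  rw [← add_sub_cancel l v]
  refine add_mem (hspan l hl ?_) (hspan _ (sub_mem hvL hl) ?_)
  · rw [hl_eq]; linarith [map_sub_le_add p ((1 / 2 : ℝ) • v) (σ • s)]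
  · rw [hvl_eq]; linarith [map_add_le_add p ((1 / 2 : ℝ) • v) (σ • s)]

end Gauge

section SuccessiveMinima

variable {k : ℕ} {K : Set (EuclideanSpace ℝ (Fin k))}

theorem succMin_nonneg (L : Set (EuclideanSpace ℝ (Fin k))) (i : ℕ) : 0 ≤ succMin K L i :=
  Real.sInf_nonneg fun _ hr => hr.1.le

theorem finrank_inter_smul_lt_of_lt_succMin {L : Set (EuclideanSpace ℝ (Fin k))} {i : ℕ} {r : ℝ}
    (hr : 0 < r) (h : r < succMin K L i) : Set.finrank ℝ (L ∩ r • K) < i := by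
  by_contra! hi
  have hle : succMin K L i ≤ r := csInf_le ⟨0, fun _ hs => hs.1.le⟩ ⟨hr, hi⟩
  exact hle.not_gt h

theorem le_finrank_inter_smul_succMin_add (hKb : Balanced ℝ K)
    {L : Set (EuclideanSpace ℝ (Fin k))} {i : ℕ} {r₀ : ℝ} (hr₀ : 0 < r₀)
    (hi : i ≤ Set.finrank ℝ (L ∩ r₀ • K)) {η : ℝ} (hη : 0 < η) :
    i ≤ Set.finrank ℝ (L ∩ (succMin K L i + η) • K) := by
  obtain ⟨r, ⟨hr, hri⟩, hlt⟩ := exists_lt_of_csInf_lt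
    (s := {r : ℝ | 0 < r ∧ i ≤ Set.finrank ℝ (L ∩ r • K)}) ⟨r₀, hr₀, hi⟩
    (lt_add_of_pos_right (succMin K L i) hη)
  exact hri.trans (finrank_inter_smul_mono hKb L hr.le hlt.le)

theorem succMin_le_two_mul_of_covers (hKc : Convex ℝ K) (hKb : Balanced ℝ K)
    (hKa : Absorbent ℝ K) (L : AddSubgroup (EuclideanSpace ℝ (Fin k))) {i : ℕ} {r₀ : ℝ}
    (hr₀ : 0 < r₀) (hi : i ≤ Set.finrank ℝ ((L : Set _) ∩ r₀ • K)) {σ : ℝ} (hσ : 0 ≤ σ)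
    (hcov : ∀ x, ∃ l ∈ L, ∃ s ∈ K, x = l + σ • s) : succMin K L i ≤ 2 * σ := by
  by_contra! hlt
  -- With `λ = succMin K L i`, the radii `r = λ + η` and `r' = λ - η / 2` satisfy
  -- `r / 2 + σ < r' < λ < r`.
  set η := (succMin K L i - 2 * σ) / 3
  have hη : 0 < η := by simp only [η]; linarith
  have hge := le_finrank_inter_smul_succMin_add hKb hr₀ hi hη
  have hle := finrank_inter_smul_le_of_covers hKc hKb hKa L
    (r := succMin K L i + η) (r' := succMin K L i - η / 2) hσ hcov
    (by linarith [succMin_nonneg (K := K) L i]) (by simp only [η]; linarith)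
  have hlt' := finrank_inter_smul_lt_of_lt_succMin (K := K) (L := L) (i := i)
    (r := succMin K L i - η / 2) (by simp only [η]; linarith) (by linarith)
  omega

theorem exists_linearIndependent_gauge_le_succMin_add (hKb : Balanced ℝ K)
    {L : Set (EuclideanSpace ℝ (Fin k))} {m : ℕ} {r₀ : ℝ} (hr₀ : 0 < r₀)
    (hm : m ≤ Set.finrank ℝ (L ∩ r₀ • K)) {η : ℝ} (hη : 0 < η) :
    ∃ v : Fin m → EuclideanSpace ℝ (Fin k), LinearIndependent ℝ v ∧
      ∀ j, v j ∈ L ∧ gauge K (v j) ≤ succMin K L (j + 1) + η := by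
  induction m with
  | zero => exact ⟨Fin.elim0, linearIndependent_empty_type, fun j => j.elim0⟩
  | succ m ih =>
    obtain ⟨v, hv, hvL⟩ := ih (by omega)
    obtain ⟨w, ⟨hwL, hwK⟩, hw⟩ := exists_mem_notMem_span_of_lt_finrank v
      (le_finrank_inter_smul_succMin_add hKb hr₀ hm hη)
    refine ⟨Fin.snoc v w, linearIndependent_finSnoc.2 ⟨hv, hw⟩, Fin.lastCases ?_ fun j => ?_⟩
    · simpa using ⟨hwL, gauge_le_of_mem (by linarith [succMin_nonneg (K := K) L (m + 1)]) hwK⟩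
    · simpa using hvL j

theorem inhomMin_le_half_sum_gauge (hKc : Convex ℝ K) (hKb : Balanced ℝ K)
    (hKa : Absorbent ℝ K) (L : AddSubgroup (EuclideanSpace ℝ (Fin k))) {ι : Type*} [Fintype ι]
    (b : Module.Basis ι ℝ (EuclideanSpace ℝ (Fin k))) (hb : ∀ i, b i ∈ L) :
    inhomMin K L ≤ (1 / 2) * ∑ i, gauge K (b i) :=
  le_of_forall_gt_imp_ge_of_dense fun σ hσ => csInf_le ⟨0, fun _ h => h.1⟩
    ⟨(mul_nonneg (by norm_num) (sum_nonneg fun i _ => gauge_nonneg _)).trans hσ.le,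
      covers_of_half_sum_gauge_lt hKc hKb hKa L b hb hσ⟩

theorem half_mul_succMin_le_inhomMin (hKc : Convex ℝ K) (hKb : Balanced ℝ K)
    (hKa : Absorbent ℝ K) (L : AddSubgroup (EuclideanSpace ℝ (Fin k))) {ι : Type*} [Fintype ι]
    (b : Module.Basis ι ℝ (EuclideanSpace ℝ (Fin k))) (hb : ∀ i, b i ∈ L) {i : ℕ} {r₀ : ℝ}
    (hr₀ : 0 < r₀) (hi : i ≤ Set.finrank ℝ ((L : Set _) ∩ r₀ • K)) :
    (1 / 2) * succMin K L i ≤ inhomMin K L := by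
  have hne : ∃ σ : ℝ, 0 ≤ σ ∧ ∀ x, ∃ l ∈ L, ∃ s ∈ K, x = l + σ • s :=
    ⟨(1 / 2) * ∑ i, gauge K (b i) + 1,
      (mul_nonneg (by norm_num) (sum_nonneg fun i _ => gauge_nonneg _)).trans (lt_add_one _).le,
      covers_of_half_sum_gauge_lt hKc hKb hKa L b hb (lt_add_one _)⟩
  refine le_csInf hne fun σ ⟨hσ, hcov⟩ => ?_
  linarith [succMin_le_two_mul_of_covers hKc hKb hKa L hr₀ hi hσ hcov]

theorem inhomMin_le_half_sum_succMin (hKc : Convex ℝ K) (hKb : Balanced ℝ K)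
    (hKa : Absorbent ℝ K) (L : AddSubgroup (EuclideanSpace ℝ (Fin k))) {r₀ : ℝ} (hr₀ : 0 < r₀)
    (hk : k ≤ Set.finrank ℝ ((L : Set _) ∩ r₀ • K)) :
    inhomMin K L ≤ (1 / 2) * ∑ i ∈ Icc 1 k, succMin K L i := by
  refine le_of_forall_pos_le_add fun ε hε => ?_
  obtain ⟨v, hv, hvL⟩ :=
    exists_linearIndependent_gauge_le_succMin_add hKb hr₀ hk (η := ε / (k + 1)) (by positivity)
  let b := basisOfLinearIndependentOfCardEqFinrank' v hv (by simp)
  calc inhomMin K L ≤ (1 / 2) * ∑ j, gauge K (b j) :=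
        inhomMin_le_half_sum_gauge hKc hKb hKa L b fun j => by simpa [b] using (hvL j).1
    _ ≤ (1 / 2) * ∑ j : Fin k, (succMin K L (j + 1) + ε / (k + 1)) := by
        gcongr with j; simpa [b] using (hvL j).2
    _ = (1 / 2) * ∑ i ∈ Icc 1 k, succMin K L i + k / (k + 1) * ε / 2 := by
        rw [sum_add_distrib, sum_Icc_one_eq_sum_fin]
        simp only [one_div, sum_const, card_univ, Fintype.card_fin, nsmul_eq_mul]
        ring
    _ ≤ (1 / 2) * ∑ i ∈ Icc 1 k, succMin K L i + ε := by
        have hk : (k : ℝ) / (k + 1) ≤ 1 := div_le_one_of_le₀ (by linarith) (by positivity)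
        nlinarith

end SuccessiveMinima

theorem setOf_mulVec_intCast_eq_span {k : ℕ} (B : Matrix (Fin k) (Fin k) ℝ) :
    {x : EuclideanSpace ℝ (Fin k) | ∃ z : Fin k → ℤ, ∀ i, x i = B.mulVec (fun j => (z j : ℝ)) i} =
      span ℤ (Set.range fun j => WithLp.toLp 2 (B.col j)) := by
  ext x
  simp only [Set.mem_ofPred_eq, SetLike.mem_coe, mem_span_range_iff_exists_fun]
  refine exists_congr fun z => ?_
  rw [eq_comm, PiLp.ext_iff]
  simp [Matrix.mulVec, dotProduct, mul_comm]

theorem linearIndependent_toLp_col {k : ℕ} {B : Matrix (Fin k) (Fin k) ℝ} (hB : B.det ≠ 0) :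
    LinearIndependent ℝ fun j => WithLp.toLp 2 (B.col j) :=
  (linearIndependent_cols_of_det_ne_zero hB).map'
    (WithLp.linearEquiv 2 ℝ (Fin k → ℝ)).symm.toLinearMap (LinearEquiv.ker _)

theorem jarnik_inequalities_general (k : ℕ)
    (K : Set (EuclideanSpace ℝ (Fin k)))
    (hKconv : Convex ℝ K)
    (hKint : (0 : EuclideanSpace ℝ (Fin k)) ∈ interior K)
    (hKsymm : ∀ x ∈ K, -x ∈ K)
    (B : Matrix (Fin k) (Fin k) ℝ) (hB : B.det ≠ 0)
    (L : Set (EuclideanSpace ℝ (Fin k)))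
    (hL : L = {x | ∃ z : Fin k → ℤ, ∀ i, x i = B.mulVec (fun j => (z j : ℝ)) i}) :
    (1 / 2) * succMin K L k ≤ inhomMin K L ∧
    inhomMin K L ≤ (1 / 2) * ∑ i ∈ Finset.Icc 1 k, succMin K L i := by
  have hKb : Balanced ℝ K := (balanced_iff_neg_mem hKconv).2 hKsymm
  have hKa : Absorbent ℝ K := absorbent_nhds_zero (mem_interior_iff_mem_nhds.1 hKint)
  let b := basisOfLinearIndependentOfCardEqFinrank' _ (linearIndependent_toLp_col hB) (by simp)
  let Λ := (span ℤ (Set.range b)).toAddSubgroup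
  have hb : ∀ j, b j ∈ Λ := fun j => subset_span ⟨j, rfl⟩
  have hLΛ : L = Λ := by rw [hL, setOf_mulVec_intCast_eq_span]; simp [Λ, b]
  obtain ⟨r₀, hr₀, hk⟩ := exists_finrank_le_finrank_inter_smul hKb hKa (Λ : Set _) b hb
  rw [finrank_euclideanSpace_fin] at hk
  subst hLΛ
  exact ⟨half_mul_succMin_le_inhomMin hKconv hKb hKa Λ b hb hr₀ hk,
    inhomMin_le_half_sum_succMin hKconv hKb hKa Λ hr₀ hk⟩

theorem jarnik_inequalities (k : ℕ) (hk : 1 ≤ k)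
    (K : Set (EuclideanSpace ℝ (Fin k)))
    (hKconv : Convex ℝ K) (hKcomp : IsCompact K)
    (hKint : (0 : EuclideanSpace ℝ (Fin k)) ∈ interior K)
    (hKsymm : ∀ x ∈ K, -x ∈ K)
    (B : Matrix (Fin k) (Fin k) ℝ) (hB : B.det ≠ 0)
    (L : Set (EuclideanSpace ℝ (Fin k)))
    (hL : L = {x | ∃ z : Fin k → ℤ, ∀ i, x i = B.mulVec (fun j => (z j : ℝ)) i}) :
    (1 / 2) * succMin K L k ≤ inhomMin K L ∧
    inhomMin K L ≤ (1 / 2) * ∑ i ∈ Finset.Icc 1 k, succMin K L i :=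
  jarnik_inequalities_general k K hKconv hKint hKsymm B hB L hL

end
end
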